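/- arXiv:2508.13928 — 10 statements merged into one kernel-verified Lean document; each statement's English description precedes it below -/
import Mathlib

section
/- Soundness of the rule (ι₂²⇒): if Γ semantically entails Δ ∪ {φ[Y:=B]}, and Γ semantically entails Δ ∪ {φ[Y:=C]}, and Γ ∪ {B = C} semantically entails Δ, then Γ ∪ {(λX ψ)(ιY φ)} semantically entails Δ, where entailment is: every model-assignment pair satisfying all of the antecedent satisfies some member of the succedent. -/
/-- Multiple-conclusion semantic entailment. -/
def Entails {W Form : Type*} (Sat : W → Form → Prop) (Γ Δ : Set Form) : Prop :=
  ∀ w : W, (∀ γ ∈ Γ, Sat w γ) → ∃ δ ∈ Δ, Sat w δ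

namespace Entails

variable {W Form : Type*} {Sat : W → Form → Prop} {Γ Γ' Δ Δ' : Set Form}

theorem mono (hΓ : Γ ⊆ Γ') (hΔ : Δ ⊆ Δ') (h : Entails Sat Γ Δ) : Entails Sat Γ' Δ' :=
  fun w hw ↦
    let ⟨δ, hδ, hsat⟩ := h w fun γ hγ ↦ hw γ (hΓ hγ)
    ⟨δ, hΔ hδ, hsat⟩

theorem mono_left (hΓ : Γ ⊆ Γ') (h : Entails Sat Γ Δ) : Entails Sat Γ' Δ :=
  h.mono hΓ subset_rfl

theorem cut {φ : Form} (h₁ : Entails Sat Γ (Δ ∪ {φ})) (h₂ : Entails Sat (Γ ∪ {φ}) Δ) :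
    Entails Sat Γ Δ := by
  intro w hw
  obtain ⟨δ, hδ | rfl, hsat⟩ := h₁ w hw
  · exact ⟨δ, hδ, hsat⟩
  · refine h₂ w fun γ hγ ↦ ?_
    rcases hγ with hγ | rfl
    exacts [hw γ hγ, hsat]

end Entails

/-- soundness of the rule (ι₂²⇒). -/
theorem stmt2_iota22_left_sound
    {W Form R : Type*} (Sat : W → Form → Prop)
    (Γ Δ : Set Form)
    (Lform φ φB φC eqBC : Form) (ψ φYX : Form)
    (updX updY : W → R → W) (valB valC : W → R)
    -- semantic clause for `(λX ψ)(ιY φ)` (only the direction needed here)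
    (hL : ∀ w, Sat w Lform →
      ∃ O : R, Sat (updX w O) ψ ∧ Sat (updX w O) φYX ∧
        ∀ O' : R, Sat (updY w O') φ → O' = O)
    -- semantic clause for the identity `B = C`
    (heq : ∀ w, Sat w eqBC ↔ valB w = valC w)
    -- substitution property for the parameters `B` and `C`
    (hsubB : ∀ w, Sat w φB ↔ Sat (updY w (valB w)) φ)
    (hsubC : ∀ w, Sat w φC ↔ Sat (updY w (valC w)) φ)
    -- the three premises of the rule
    (h1 : Entails Sat Γ (Δ ∪ {φB}))
    (h2 : Entails Sat Γ (Δ ∪ {φC}))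
    (h3 : Entails Sat (Γ ∪ {eqBC}) Δ) :
    Entails Sat (Γ ∪ {Lform}) Δ := by
  -- Both `B` and `C` satisfy `φ`, so uniqueness of the description forces `B = C`.
  have hBC : Entails Sat (Γ ∪ {Lform} ∪ {φB} ∪ {φC}) {eqBC} := by
    intro w hw
    obtain ⟨O, -, -, huniq⟩ := hL w (hw Lform (by simp))
    have hB := huniq _ ((hsubB w).mp (hw φB (by simp)))
    have hC := huniq _ ((hsubC w).mp (hw φC (by simp)))
    exact ⟨eqBC, rfl, (heq w).mpr (hB.trans hC.symm)⟩
  refine (h1.mono_left ?_).cut <| (h2.mono_left ?_).cut <|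
    (hBC.mono subset_rfl Set.subset_union_right).cut (h3.mono_left ?_)
  all_goals intro _; simp only [Set.mem_union, Set.mem_singleton_iff]; tauto
end

section
/- Soundness of the rule (⇒ι²): if Γ ⊨ Δ ∪ {φ[Y:=B]}, Γ ⊨ Δ ∪ {ψ[X:=B]}, and for a fresh relational parameter A (not occurring in Γ, Δ, φ), Γ ∪ {φ[Y:=A]} ⊨ Δ ∪ {A = B}, then Γ ⊨ Δ ∪ {(λX ψ)(ιY φ)}. -/
namespace Entails

variable {W Form : Type*} {Sat : W → Form → Prop} {Γ Δ : Set Form} {φ : Form}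

theorem sat_of_union_singleton (h : Entails Sat Γ (Δ ∪ {φ})) {w : W}
    (hΓ : ∀ γ ∈ Γ, Sat w γ) (hΔ : ∀ δ ∈ Δ, ¬ Sat w δ) : Sat w φ := by
  obtain ⟨δ, hδ | rfl, hsat⟩ := h w hΓ
  · exact absurd hsat (hΔ δ hδ)
  · exact hsat

theorem union_singleton_of_forall
    (h : ∀ w, (∀ γ ∈ Γ, Sat w γ) → (∀ δ ∈ Δ, ¬ Sat w δ) → Sat w φ) :
    Entails Sat Γ (Δ ∪ {φ}) := by
  intro w hΓ
  by_cases hΔ : ∃ δ ∈ Δ, Sat w δ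
  · obtain ⟨δ, hδ, hsat⟩ := hΔ
    exact ⟨δ, Or.inl hδ, hsat⟩
  · push Not at hΔ
    exact ⟨φ, Or.inr rfl, h w hΓ hΔ⟩

end Entails

/-- soundness of the rule (⇒ι²), with a fresh relational
parameter `A` not occurring in Γ, Δ, φ. -/
theorem stmt3_iota2_right_sound
    {W Form R : Type*} (Sat : W → Form → Prop)
    (Γ Δ : Set Form)
    (Lform φ ψ φB ψB φA eqAB φYX : Form)
    (updX updY : W → R → W) (setA : W → R → W) (valA valB : W → R)
    -- semantic clause for `(λX ψ)(ιY φ)`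
    (hL : ∀ w, Sat w Lform ↔
      ∃ O : R, Sat (updX w O) ψ ∧ Sat (updX w O) φYX ∧
        ∀ O' : R, Sat (updY w O') φ → O' = O)
    -- substitution properties
    (hsubφB : ∀ w, Sat w φB ↔ Sat (updY w (valB w)) φ)
    (hsubψB : ∀ w, Sat w ψB ↔ Sat (updX w (valB w)) ψ)
    (hsubφA : ∀ w, Sat w φA ↔ Sat (updY w (valA w)) φ)
    (hsubφYX : ∀ w O, Sat (updX w O) φYX ↔ Sat (updY w O) φ)
    -- semantic clause for `A = B`
    (heqAB : ∀ w, Sat w eqAB ↔ valA w = valB w)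
    -- freshness of `A`: its value can be varied arbitrarily without
    -- affecting the satisfaction of Γ, Δ, φ, and without affecting `valB`
    (hvalA : ∀ w O, valA (setA w O) = O)
    (hvalB : ∀ w O, valB (setA w O) = valB w)
    (hfreshΓ : ∀ w O, ∀ γ ∈ Γ, (Sat (setA w O) γ ↔ Sat w γ))
    (hfreshΔ : ∀ w O, ∀ δ ∈ Δ, (Sat (setA w O) δ ↔ Sat w δ))
    (hfreshφ : ∀ w O O', Sat (updY (setA w O) O') φ ↔ Sat (updY w O') φ)
    -- the three premises of the rule
    (h1 : Entails Sat Γ (Δ ∪ {φB}))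
    (h2 : Entails Sat Γ (Δ ∪ {ψB}))
    (h3 : Entails Sat (Γ ∪ {φA}) (Δ ∪ {eqAB})) :
    Entails Sat Γ (Δ ∪ {Lform}) := by
  refine Entails.union_singleton_of_forall fun w hΓ hΔ => (hL w).2 ⟨valB w, ?_, ?_, ?_⟩
  · exact (hsubψB w).1 (h2.sat_of_union_singleton hΓ hΔ)
  · exact (hsubφYX w _).2 ((hsubφB w).1 (h1.sat_of_union_singleton hΓ hΔ))
  · intro O hO
    have hΓA : ∀ γ ∈ Γ ∪ {φA}, Sat (setA w O) γ := by
      rintro γ (hγ | rfl)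
      · exact (hfreshΓ w O γ hγ).2 (hΓ γ hγ)
      · rwa [hsubφA, hvalA, hfreshφ]
    have hΔA : ∀ δ ∈ Δ, ¬ Sat (setA w O) δ := fun δ hδ hsat =>
      hΔ δ hδ ((hfreshΔ w O δ hδ).1 hsat)
    have hAB := (heqAB _).1 (h3.sat_of_union_singleton hΓA hΔA)
    rwa [hvalA, hvalB] at hAB
end

section
/- Soundness of the rule (ι₁²⇒): if Γ ∪ {φ[Y:=A], ψ[X:=A]} ⊨ Δ for a fresh relational parameter A not occurring in Γ, Δ, φ, ψ, then Γ ∪ {(λX ψ)(ιY φ)} ⊨ Δ. -/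
theorem Entails.of_forall_exists {W Form : Type*} {Sat : W → Form → Prop} {Γ Γ' Δ : Set Form}
    (h : Entails Sat Γ Δ)
    (hw : ∀ w, (∀ γ ∈ Γ', Sat w γ) →
      ∃ w', (∀ γ ∈ Γ, Sat w' γ) ∧ ∀ δ ∈ Δ, Sat w' δ → Sat w δ) :
    Entails Sat Γ' Δ := by
  intro w hΓ'
  obtain ⟨w', hΓ, hΔ⟩ := hw w hΓ'
  obtain ⟨δ, hδ, hsat⟩ := h w' hΓ
  exact ⟨δ, hδ, hΔ δ hδ hsat⟩

/-- soundness of the rule (ι₁²⇒), with a fresh relational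
parameter `A` not occurring in Γ, Δ, φ, ψ. -/
theorem stmt4_iota21_left_sound
    {W Form R : Type*} (Sat : W → Form → Prop)
    (Γ Δ : Set Form)
    (Lform φ ψ φA ψA φYX : Form)
    (updX updY : W → R → W) (setA : W → R → W) (valA : W → R)
    -- semantic clause for `(λX ψ)(ιY φ)` (only the direction needed here)
    (hL : ∀ w, Sat w Lform →
      ∃ O : R, Sat (updX w O) ψ ∧ Sat (updX w O) φYX ∧
        ∀ O' : R, Sat (updY w O') φ → O' = O)
    -- substitution properties
    (hsubφA : ∀ w, Sat w φA ↔ Sat (updY w (valA w)) φ)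
    (hsubψA : ∀ w, Sat w ψA ↔ Sat (updX w (valA w)) ψ)
    (hsubφYX : ∀ w O, Sat (updX w O) φYX ↔ Sat (updY w O) φ)
    -- freshness of `A` w.r.t. Γ, Δ, φ, ψ
    (hvalA : ∀ w O, valA (setA w O) = O)
    (hfreshΓ : ∀ w O, ∀ γ ∈ Γ, (Sat (setA w O) γ ↔ Sat w γ))
    (hfreshΔ : ∀ w O, ∀ δ ∈ Δ, (Sat (setA w O) δ ↔ Sat w δ))
    (hfreshφ : ∀ w O O', Sat (updY (setA w O) O') φ ↔ Sat (updY w O') φ)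
    (hfreshψ : ∀ w O O', Sat (updX (setA w O) O') ψ ↔ Sat (updX w O') ψ)
    -- the premise of the rule
    (h1 : Entails Sat (Γ ∪ {φA, ψA}) Δ) :
    Entails Sat (Γ ∪ {Lform}) Δ := by
  refine h1.of_forall_exists fun w hw => ?_
  simp only [Set.mem_union, Set.mem_singleton_iff, or_imp, forall_and, forall_eq] at hw
  obtain ⟨O, hψ, hφYX, -⟩ := hL w hw.2
  have hφA : Sat (setA w O) φA := by rw [hsubφA, hvalA, hfreshφ, ← hsubφYX]; exact hφYX
  have hψA : Sat (setA w O) ψA := by rw [hsubψA, hvalA, hfreshψ]; exact hψ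
  refine ⟨setA w O, ?_, fun δ hδ => (hfreshΔ w O δ hδ).mp⟩
  rintro γ (hγ | rfl | rfl)
  exacts [(hfreshΓ w O γ hγ).mpr (hw.1 γ hγ), hφA, hψA]
end

section
/- Soundness of the second-order identity right rule (⇒=²): if for fresh individual parameters a₁,…,aₙ, Γ ∪ {X(a₁,…,aₙ)} ⊨ Δ ∪ {Y(a₁,…,aₙ)} and Γ ∪ {Y(a₁,…,aₙ)} ⊨ Δ ∪ {X(a₁,…,aₙ)}, then Γ ⊨ Δ ∪ {X = Y}, where X = Y is interpreted as v(X) = v(Y) with v(X), v(Y) : Set (Fin n → D). -/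
theorem entails_union_singleton_iff {W Form : Type*} {Sat : W → Form → Prop} {Γ Δ : Set Form}
    {ψ : Form} :
    Entails Sat Γ (Δ ∪ {ψ}) ↔
      ∀ w, (∀ γ ∈ Γ, Sat w γ) → (∀ δ ∈ Δ, ¬ Sat w δ) → Sat w ψ := by
  constructor
  · intro h w hΓ hΔ
    obtain ⟨δ, hδ | rfl, hs⟩ := h w hΓ
    exacts [absurd hs (hΔ δ hδ), hs]
  · intro h w hΓ
    by_cases hΔ : ∃ δ ∈ Δ, Sat w δ
    · obtain ⟨δ, hδ, hs⟩ := hΔ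
      exact ⟨δ, Or.inl hδ, hs⟩
    · push Not at hΔ
      exact ⟨ψ, Or.inr rfl, h w hΓ hΔ⟩

theorem Entails.sat_of_sat {W Form : Type*} {Sat : W → Form → Prop} {Γ Δ : Set Form}
    {φ ψ : Form} (h : Entails Sat (Γ ∪ {φ}) (Δ ∪ {ψ})) {w : W} (hΓ : ∀ γ ∈ Γ, Sat w γ)
    (hΔ : ∀ δ ∈ Δ, ¬ Sat w δ) (hφ : Sat w φ) : Sat w ψ :=
  entails_union_singleton_iff.1 h w (by rintro γ (hγ | rfl) <;> simp_all) hΔ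

theorem subset_of_entails_of_fresh {W Form T : Type*} {Sat : W → Form → Prop}
    {Γ Δ : Set Form} {tup : W → T} {reassign : W → T → W}
    (htup : ∀ w t, tup (reassign w t) = t)
    (hfreshΓ : ∀ w t, ∀ γ ∈ Γ, (Sat (reassign w t) γ ↔ Sat w γ))
    (hfreshΔ : ∀ w t, ∀ δ ∈ Δ, (Sat (reassign w t) δ ↔ Sat w δ))
    {φ ψ : Form} {P Q : W → Set T}
    (hφ : ∀ w, Sat w φ ↔ tup w ∈ P w) (hψ : ∀ w, Sat w ψ ↔ tup w ∈ Q w)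
    (hP : ∀ w t, P (reassign w t) = P w) (hQ : ∀ w t, Q (reassign w t) = Q w)
    (h : Entails Sat (Γ ∪ {φ}) (Δ ∪ {ψ})) {w : W} (hΓ : ∀ γ ∈ Γ, Sat w γ)
    (hΔ : ∀ δ ∈ Δ, ¬ Sat w δ) : P w ⊆ Q w := by
  intro t ht
  have hsat : Sat (reassign w t) ψ :=
    h.sat_of_sat (fun γ hγ => (hfreshΓ w t γ hγ).2 (hΓ γ hγ))
      (fun δ hδ => (hfreshΔ w t δ hδ).not.2 (hΔ δ hδ))
      ((hφ _).2 (by rwa [htup, hP]))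
  simpa only [hψ, htup, hQ] using hsat

/-- soundness of the right rule (⇒=²) for second-order identity,
with fresh individual parameters a₁,…,aₙ. `tupA w` is the tuple
`(v a₁, …, v aₙ)` at the model-assignment pair `w`; `setA w t` reassigns the
parameters a₁,…,aₙ so that this tuple becomes `t`. -/
theorem stmt5_soi_right_sound
    {W Form : Type*} {D : Type*} {n : ℕ} (Sat : W → Form → Prop)
    (Γ Δ : Set Form)
    (atomXa atomYa eqXY : Form)
    (valX valY : W → Set (Fin n → D))
    (tupA : W → (Fin n → D)) (setA : W → (Fin n → D) → W)
    -- semantic clauses for the atoms X(a₁,…,aₙ), Y(a₁,…,aₙ) and for X = Y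
    (hatomX : ∀ w, Sat w atomXa ↔ tupA w ∈ valX w)
    (hatomY : ∀ w, Sat w atomYa ↔ tupA w ∈ valY w)
    (heq : ∀ w, Sat w eqXY ↔ valX w = valY w)
    -- freshness: a₁,…,aₙ may be reassigned to realize any tuple, without
    -- affecting v(X), v(Y) or the satisfaction of formulas in Γ, Δ
    (htup : ∀ w t, tupA (setA w t) = t)
    (hvalX : ∀ w t, valX (setA w t) = valX w)
    (hvalY : ∀ w t, valY (setA w t) = valY w)
    (hfreshΓ : ∀ w t, ∀ γ ∈ Γ, (Sat (setA w t) γ ↔ Sat w γ))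
    (hfreshΔ : ∀ w t, ∀ δ ∈ Δ, (Sat (setA w t) δ ↔ Sat w δ))
    -- the two premises of the rule
    (h1 : Entails Sat (Γ ∪ {atomXa}) (Δ ∪ {atomYa}))
    (h2 : Entails Sat (Γ ∪ {atomYa}) (Δ ∪ {atomXa})) :
    Entails Sat Γ (Δ ∪ {eqXY}) := by
  refine entails_union_singleton_iff.2 fun w hΓ hΔ => (heq w).2 (subset_antisymm ?_ ?_)
  · exact subset_of_entails_of_fresh htup hfreshΓ hfreshΔ hatomX hatomY hvalX hvalY h1 hΓ hΔ
  · exact subset_of_entails_of_fresh htup hfreshΓ hfreshΔ hatomY hatomX hvalY hvalX h2 hΓ hΔ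
end

section
/- Given a sequent calculus with axiom schema φ ⇒ φ, weakening on both sides, cut, and the rule (=²⇒) (from Γ ⇒ Δ, 𝒜[X:=B], 𝒜[X:=C] and 𝒜[X:=B], 𝒜[X:=C], Γ ⇒ Δ infer B = C, Γ ⇒ Δ, for atomic 𝒜 — here instantiated with atoms), the rule (=²−) is derivable: if 𝒜[X:=C], Γ ⇒ Δ is derivable, then B = C, 𝒜[X:=B], Γ ⇒ Δ is derivable. -/
namespace Stmt9

/-- Formulas: atomic formulas `𝒜[X:=B]` (an atomic schema index applied to a
relational parameter), second-order identities `B = C`, and other formulas. -/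
inductive Form (RPar Other : Type) : Type where
  | atom : ℕ → RPar → Form RPar Other   -- `atom i B` is the atom 𝒜ᵢ[X:=B]
  | eq : RPar → RPar → Form RPar Other
  | other : Other → Form RPar Other

variable {RPar Other : Type}

/-- Sequent calculus with the axiom schema, weakening, cut, and the
second-order identity left rule (=²⇒) for atomic formulas. -/
inductive Derivable :
    Multiset (Form RPar Other) → Multiset (Form RPar Other) → Prop where
  | ax (φ : Form RPar Other) : Derivable {φ} {φ}
  | wL (φ : Form RPar Other) {Γ Δ} :
      Derivable Γ Δ → Derivable (φ ::ₘ Γ) Δ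
  | wR (φ : Form RPar Other) {Γ Δ} :
      Derivable Γ Δ → Derivable Γ (φ ::ₘ Δ)
  | cut (φ : Form RPar Other) {Γ Δ P S} :
      Derivable Γ (φ ::ₘ Δ) → Derivable (φ ::ₘ P) S →
      Derivable (Γ + P) (Δ + S)
  | eqL (i : ℕ) (B C : RPar) {Γ Δ} :
      Derivable Γ (Form.atom i B ::ₘ Form.atom i C ::ₘ Δ) →
      Derivable (Form.atom i B ::ₘ Form.atom i C ::ₘ Γ) Δ →
      Derivable (Form.eq B C ::ₘ Γ) Δ

namespace Derivable

variable {Γ Δ : Multiset (Form RPar Other)}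

theorem weakenL (Γ' : Multiset (Form RPar Other)) (h : Derivable Γ Δ) :
    Derivable (Γ + Γ') Δ := by
  induction Γ' using Multiset.induction_on with
  | empty => simpa only [add_zero] using h
  | cons φ Γ' ih => simpa only [Multiset.add_cons] using wL φ ih

theorem weakenR (Δ' : Multiset (Form RPar Other)) (h : Derivable Γ Δ) :
    Derivable Γ (Δ + Δ') := by
  induction Δ' using Multiset.induction_on with
  | empty => simpa only [add_zero] using h
  | cons φ Δ' ih => simpa only [Multiset.add_cons] using wR φ ih

theorem of_mem (φ : Form RPar Other) (hΓ : φ ∈ Γ) (hΔ : φ ∈ Δ) : Derivable Γ Δ := by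
  obtain ⟨Γ', rfl⟩ := Multiset.exists_cons_of_mem hΓ
  obtain ⟨Δ', rfl⟩ := Multiset.exists_cons_of_mem hΔ
  simpa only [Multiset.singleton_add] using weakenL Γ' (weakenR Δ' (ax φ))

theorem eq_atom_atom (i : ℕ) (B C : RPar) :
    Derivable (Form.eq B C ::ₘ {Form.atom i B} : Multiset (Form RPar Other))
      {Form.atom i C} :=
  eqL i B C (of_mem (Form.atom i B) (by simp) (by simp))
    (of_mem (Form.atom i C) (by simp) (by simp))

end Derivable

/-- Proposition 1, second part: the rule (=²−) is derivable:
if `𝒜[X:=C], Γ ⇒ Δ` is derivable, so is `B = C, 𝒜[X:=B], Γ ⇒ Δ`. -/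
theorem eq2_minus_derivable
    (i : ℕ) (B C : RPar) (Γ Δ : Multiset (Form RPar Other))
    (h : Derivable (Form.atom i C ::ₘ Γ) Δ) :
    Derivable (Form.eq B C ::ₘ Form.atom i B ::ₘ Γ) Δ := by
  simpa using Derivable.cut (Δ := 0) (Form.atom i C) (Derivable.eq_atom_atom i B C) h

end Stmt9
end

section
/- In a maximal consistent extended sequent Γ ⇒ Δ (S-consistent, internally maximal, with the witness property), the biconditional case of the truth lemma holds: if the calculus contains the rules (↔⇒) and (⇒↔), then φ ↔ ψ ∈ Γ implies (φ ∈ Γ ∧ ψ ∈ Γ) ∨ (φ ∈ Δ ∧ ψ ∈ Δ), and φ ↔ ψ ∈ Δ implies (φ ∈ Γ ∧ ψ ∈ Δ) ∨ (ψ ∈ Γ ∧ φ ∈ Δ). -/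
/-!
For a consistent, internally maximal `(Γ, Δ)`, the extension `(Γ ∪ A, Δ ∪ B)` is consistent
exactly when `A ⊆ Γ` and `B ⊆ Δ`. A two-premise rule, applied to finite witnesses merged by
weakening, passes consistency of (the extension by) its conclusion to one of its premises. So
`φ ↔ ψ ∈ Γ` and (↔⇒) make `(Γ, Δ ∪ {φ, ψ})` or `(Γ ∪ {φ, ψ}, Δ)` consistent, and `φ ↔ ψ ∈ Δ`
and (⇒↔) make `(Γ ∪ {φ}, Δ ∪ {ψ})` or `(Γ ∪ {ψ}, Δ ∪ {φ})` consistent.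
-/

namespace Stmt12

variable {Form : Type*}

/-- S-consistency of an extended sequent (Γ, Δ): no finite sub-sequent is
derivable. -/
def SCon (Der : Finset Form → Finset Form → Prop) (Γ Δ : Set Form) : Prop :=
  ∀ Θ Λ : Finset Form, ↑Θ ⊆ Γ → ↑Λ ⊆ Δ → ¬ Der Θ Λ

/-- Internal S-maximality with respect to a formula χ. -/
def InternallyMaximalAt (Der : Finset Form → Finset Form → Prop)
    (Γ Δ : Set Form) (χ : Form) : Prop :=
  (χ ∉ Γ → ¬ SCon Der (Γ ∪ {χ}) Δ) ∧ (χ ∉ Δ → ¬ SCon Der Γ (Δ ∪ {χ}))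

section Lemmas

variable {Der : Finset Form → Finset Form → Prop} {Γ Δ : Set Form}

theorem SCon.mono {Γ' Δ' : Set Form} (h : SCon Der Γ Δ) (hΓ : Γ' ⊆ Γ) (hΔ : Δ' ⊆ Δ) :
    SCon Der Γ' Δ' :=
  fun Θ Λ hΘ hΛ => h Θ Λ (hΘ.trans hΓ) (hΛ.trans hΔ)

theorem sCon_union_iff_subset (hcon : SCon Der Γ Δ)
    (hmax : ∀ χ : Form, InternallyMaximalAt Der Γ Δ χ) {A B : Set Form} :
    SCon Der (Γ ∪ A) (Δ ∪ B) ↔ A ⊆ Γ ∧ B ⊆ Δ := by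
  refine ⟨fun h => ⟨fun χ hχ => ?_, fun χ hχ => ?_⟩, fun ⟨hA, hB⟩ => ?_⟩
  · by_contra hχΓ
    exact (hmax χ).1 hχΓ <| h.mono (by gcongr; simpa) Set.subset_union_left
  · by_contra hχΔ
    exact (hmax χ).2 hχΔ <| h.mono Set.subset_union_left (by gcongr; simpa)
  · rwa [Set.union_eq_self_of_subset_right hA, Set.union_eq_self_of_subset_right hB]

variable [DecidableEq Form]
  (hweak : ∀ {Θ Λ Θ' Λ' : Finset Form}, Der Θ Λ → Θ ⊆ Θ' → Λ ⊆ Λ' → Der Θ' Λ')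
include hweak

theorem exists_der_of_not_sCon_union {A B : Finset Form}
    (h : ¬ SCon Der (Γ ∪ ↑A) (Δ ∪ ↑B)) :
    ∃ Θ Λ : Finset Form, ↑Θ ⊆ Γ ∧ ↑Λ ⊆ Δ ∧ Der (A ∪ Θ) (B ∪ Λ) := by
  simp only [SCon, not_forall, not_not] at h
  obtain ⟨Θ, Λ, hΘ, hΛ, hder⟩ := h
  refine ⟨Θ \ A, Λ \ B, ?_, ?_, hweak hder ?_ ?_⟩
  · intro x hx
    simp only [Finset.coe_sdiff, Set.mem_sdiff, Finset.mem_coe] at hx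
    exact (hΘ hx.1).resolve_right hx.2
  · intro x hx
    simp only [Finset.coe_sdiff, Set.mem_sdiff, Finset.mem_coe] at hx
    exact (hΛ hx.1).resolve_right hx.2
  · rw [Finset.union_sdiff_self_eq_union]; exact Finset.subset_union_right
  · rw [Finset.union_sdiff_self_eq_union]; exact Finset.subset_union_right

theorem sCon_or_sCon_of_rule {A₁ B₁ A₂ B₂ C D : Finset Form}
    (hrule : ∀ Θ Λ : Finset Form,
      Der (A₁ ∪ Θ) (B₁ ∪ Λ) → Der (A₂ ∪ Θ) (B₂ ∪ Λ) → Der (C ∪ Θ) (D ∪ Λ))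
    (h : SCon Der (Γ ∪ ↑C) (Δ ∪ ↑D)) :
    SCon Der (Γ ∪ ↑A₁) (Δ ∪ ↑B₁) ∨ SCon Der (Γ ∪ ↑A₂) (Δ ∪ ↑B₂) := by
  by_contra! hboth
  obtain ⟨Θ₁, Λ₁, hΘ₁, hΛ₁, hder₁⟩ := exists_der_of_not_sCon_union hweak hboth.1
  obtain ⟨Θ₂, Λ₂, hΘ₂, hΛ₂, hder₂⟩ := exists_der_of_not_sCon_union hweak hboth.2
  have hder := hrule (Θ₁ ∪ Θ₂) (Λ₁ ∪ Λ₂)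
    (hweak hder₁ (by gcongr; exact Finset.subset_union_left)
      (by gcongr; exact Finset.subset_union_left))
    (hweak hder₂ (by gcongr; exact Finset.subset_union_right)
      (by gcongr; exact Finset.subset_union_right))
  refine h _ _ ?_ ?_ hder
  · rw [Finset.coe_union, Finset.coe_union]
    exact Set.union_subset Set.subset_union_right
      (Set.union_subset hΘ₁ hΘ₂ |>.trans Set.subset_union_left)
  · rw [Finset.coe_union, Finset.coe_union]
    exact Set.union_subset Set.subset_union_right
      (Set.union_subset hΛ₁ hΛ₂ |>.trans Set.subset_union_left)

end Lemmas

/-- the biconditional case of the truth lemma for a maximal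
consistent extended sequent. -/
theorem stmt12_iff_truth_lemma [DecidableEq Form]
    (Der : Finset Form → Finset Form → Prop)
    (iff : Form → Form → Form)
    -- closure under weakening
    (hweak : ∀ {Θ Λ Θ' Λ' : Finset Form}, Der Θ Λ → Θ ⊆ Θ' → Λ ⊆ Λ' → Der Θ' Λ')
    -- the rule (↔⇒)
    (hiffL : ∀ (φ ψ : Form) (Θ Λ : Finset Form),
      Der Θ (insert φ (insert ψ Λ)) → Der (insert φ (insert ψ Θ)) Λ →
      Der (insert (iff φ ψ) Θ) Λ)
    -- the rule (⇒↔)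
    (hiffR : ∀ (φ ψ : Form) (Θ Λ : Finset Form),
      Der (insert φ Θ) (insert ψ Λ) → Der (insert ψ Θ) (insert φ Λ) →
      Der Θ (insert (iff φ ψ) Λ))
    (Γ Δ : Set Form)
    (hcon : SCon Der Γ Δ)
    (hmax : ∀ χ : Form, InternallyMaximalAt Der Γ Δ χ)
    (φ ψ : Form) :
    (iff φ ψ ∈ Γ → (φ ∈ Γ ∧ ψ ∈ Γ) ∨ (φ ∈ Δ ∧ ψ ∈ Δ)) ∧
    (iff φ ψ ∈ Δ → (φ ∈ Γ ∧ ψ ∈ Δ) ∨ (ψ ∈ Γ ∧ φ ∈ Δ)) := by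
  have hsCon {A B : Set Form} : SCon Der (Γ ∪ A) (Δ ∪ B) ↔ A ⊆ Γ ∧ B ⊆ Δ :=
    sCon_union_iff_subset hcon hmax
  constructor
  · intro hiff
    have hconcl : SCon Der (Γ ∪ ↑({iff φ ψ} : Finset Form)) (Δ ∪ ↑(∅ : Finset Form)) :=
      hsCon.2 ⟨by simpa, by simp⟩
    have hrule (Θ Λ : Finset Form) : Der (∅ ∪ Θ) ({φ, ψ} ∪ Λ) → Der ({φ, ψ} ∪ Θ) (∅ ∪ Λ) →
        Der ({iff φ ψ} ∪ Θ) (∅ ∪ Λ) := by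
      simpa only [Finset.empty_union, Finset.insert_union, Finset.singleton_union]
        using hiffL φ ψ Θ Λ
    rcases sCon_or_sCon_of_rule hweak hrule hconcl with h | h
    · right; simpa [Set.insert_subset_iff] using (hsCon.1 h).2
    · left; simpa [Set.insert_subset_iff] using (hsCon.1 h).1
  · intro hiff
    have hconcl : SCon Der (Γ ∪ ↑(∅ : Finset Form)) (Δ ∪ ↑({iff φ ψ} : Finset Form)) :=
      hsCon.2 ⟨by simp, by simpa⟩
    have hrule (Θ Λ : Finset Form) : Der ({φ} ∪ Θ) ({ψ} ∪ Λ) → Der ({ψ} ∪ Θ) ({φ} ∪ Λ) →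
        Der (∅ ∪ Θ) ({iff φ ψ} ∪ Λ) := by
      simpa only [Finset.empty_union, Finset.singleton_union] using hiffR φ ψ Θ Λ
    rcases sCon_or_sCon_of_rule hweak hrule hconcl with h | h
    · left; simpa using hsCon.1 h
    · right; simpa using hsCon.1 h

end Stmt12
end

section
/- Truth-lemma case for second-order existential quantification: let (Γ, Δ) be a maximal consistent extended sequent with the witness property, and let ⟦·⟧ be the canonical interpretation where v(K) for each relational constant K lies in the domain G of the general model and where the induction hypothesis holds for φ-instances. If ∃X φ ∈ Γ then M,v ⊨ ∃X φ; and if M,v ⊨ ∃X φ (satisfaction defined by ∃ O ∈ G, M,v[X:=O] ⊨ φ) then ∃X φ ∉ Δ. -/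
/-!
A witness `K` for `∃X φ ∈ Γ` gives `M,v[X:=⟦K⟧] ⊨ φ` with `⟦K⟧ ∈ G`. Conversely, a
satisfying `O ∈ G` is named by some `K`, so `φ[X:=K] ∉ Δ`; maximality then yields a
derivable `Θ ⇒ Λ, φ[X:=K]`, rule (⇒∃²) turns it into `Θ ⇒ Λ, ∃X φ`, and `∃X φ ∈ Δ`
would contradict consistency.
-/

namespace Stmt13

variable {Form : Type*}

/-- S-consistency of an extended sequent (Γ, Δ): no finite sub-sequent is
derivable. -/
def SCon (Der : Finset Form → Finset Form → Prop) (Γ Δ : Set Form) : Prop :=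
  ∀ Θ Λ : Finset Form, ↑Θ ⊆ Γ → ↑Λ ⊆ Δ → ¬ Der Θ Λ

theorem SCon.notMem_of_der_insert [DecidableEq Form]
    {Der : Finset Form → Finset Form → Prop} {Γ Δ : Set Form} (hcon : SCon Der Γ Δ)
    {Θ Λ : Finset Form} {φ : Form} (hΘ : ↑Θ ⊆ Γ) (hΛ : ↑Λ ⊆ Δ)
    (hder : Der Θ (insert φ Λ)) : φ ∉ Δ := fun hφ =>
  hcon Θ (insert φ Λ) hΘ (by rw [Finset.coe_insert]; exact Set.insert_subset hφ hΛ) hder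

/-- `exF` is the formula ∃X φ, `inst K` is φ[X:=K] for a relational constant K,
`val K` the canonical interpretation of K, and `SatAt O` is `M,v[X:=O] ⊨ φ`. -/
theorem stmt13_exists2_truth_lemma [DecidableEq Form]
    {R RCon : Type*}
    (Der : Finset Form → Finset Form → Prop)
    (Γ Δ : Set Form) (G : Set R)
    (exF : Form) (inst : RCon → Form) (val : RCon → R)
    (SatAt : R → Prop)
    -- canonical interpretation: relational constants name all of G
    (hvalG : ∀ K, val K ∈ G)
    (hnames : ∀ O ∈ G, ∃ K, val K = O)
    -- witness property for ∃X φ ∈ Γ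
    (hwit : exF ∈ Γ → ∃ K, inst K ∈ Γ)
    -- induction hypotheses for the instances of φ
    (ih₁ : ∀ K, inst K ∈ Γ → SatAt (val K))
    (ih₂ : ∀ K, SatAt (val K) → inst K ∉ Δ)
    -- Prop41-style consequence of internal maximality (right-hand side)
    (hmaxR : ∀ K, inst K ∉ Δ →
      ∃ Θ Λ : Finset Form, ↑Θ ⊆ Γ ∧ ↑Λ ⊆ Δ ∧ Der Θ (insert (inst K) Λ))
    -- closure under the rule (⇒∃²)
    (hexR : ∀ (K : RCon) (Θ Λ : Finset Form),
      Der Θ (insert (inst K) Λ) → Der Θ (insert exF Λ))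
    (hcon : SCon Der Γ Δ) :
    (exF ∈ Γ → ∃ O ∈ G, SatAt O) ∧ ((∃ O ∈ G, SatAt O) → exF ∉ Δ) := by
  constructor
  · intro hΓ
    obtain ⟨K, hK⟩ := hwit hΓ
    exact ⟨val K, hvalG K, ih₁ K hK⟩
  · rintro ⟨O, hOG, hO⟩
    obtain ⟨K, rfl⟩ := hnames O hOG
    obtain ⟨Θ, Λ, hΘ, hΛ, hder⟩ := hmaxR K (ih₂ K hO)
    exact hcon.notMem_of_der_insert hΘ hΛ (hexR K Θ Λ hder)

end Stmt13
end

section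
/- Truth-lemma case for second-order identity in Γ: suppose (Γ, Δ) is S-consistent and internally S-maximal, the calculus has weakening and the rule (=²⇒), and for atoms the induction hypothesis holds (𝒜 ∈ Γ → Sat 𝒜, 𝒜 ∈ Δ → ¬Sat 𝒜). If X = Y ∈ Γ then for all tuples ō of canonical-domain elements, either both X(ō), Y(ō) ∈ Γ or both X(ō), Y(ō) ∈ Δ; consequently v(X) = v(Y), i.e., M,v ⊨ X = Y. -/
/-!
Suppose `X(ō)` is missing from `Γ` or `Y(ō)` is, and likewise for `Δ`. Internal maximality then
yields finite derivations of `X(ō), Y(ō), Θ ⇒ Λ` and `Θ ⇒ Λ, X(ō), Y(ō)` with `Θ ⊆ Γ`, `Λ ⊆ Δ`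
(after weakening to common contexts), and the rule `(=²⇒)` turns them into a derivation of
`X = Y, Θ ⇒ Λ`, contradicting S-consistency since `X = Y ∈ Γ`. So both atoms lie in `Γ` or
both in `Δ`; as `Γ` and `Δ` are disjoint on atoms, `X(ō) ∈ Γ ↔ Y(ō) ∈ Γ`.
-/

namespace Stmt15

/-- Formulas of the relevant fragment: relational atoms `Z(ō)` over
canonical-domain elements, second-order identities, and other formulas. -/
inductive Form (RVar K Other : Type) (n : ℕ) : Type where
  | atom : RVar → (Fin n → K) → Form RVar K Other n
  | eq : RVar → RVar → Form RVar K Other n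
  | other : Other → Form RVar K Other n
  deriving DecidableEq

variable {RVar K Other : Type} {n : ℕ}

/-- S-consistency of an extended sequent (Γ, Δ). -/
def SCon [DecidableEq RVar] [DecidableEq K] [DecidableEq Other]
    (Der : Finset (Form RVar K Other n) → Finset (Form RVar K Other n) → Prop)
    (Γ Δ : Set (Form RVar K Other n)) : Prop :=
  ∀ Θ Λ : Finset (Form RVar K Other n), ↑Θ ⊆ Γ → ↑Λ ⊆ Δ → ¬ Der Θ Λ

section Weakening

variable {α : Type*} [DecidableEq α] {Der : Finset α → Finset α → Prop} {Γ Δ : Set α}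

theorem insert_subset_insert_insert_of_mem_pair {a b c : α} (hc : c = a ∨ c = b)
    (S : Finset α) : insert c S ⊆ insert a (insert b S) := by
  rcases hc with rfl | rfl
  · exact Finset.insert_subset_insert _ (Finset.subset_insert _ _)
  · exact Finset.insert_subset_iff.mpr ⟨by simp, (Finset.subset_insert _ _).trans
      (Finset.subset_insert _ _)⟩

theorem exists_der_insert_insert_left
    (hweak : ∀ {Θ Λ Θ' Λ' : Finset α}, Der Θ Λ → Θ ⊆ Θ' → Λ ⊆ Λ' → Der Θ' Λ')
    (hmaxL : ∀ χ, χ ∉ Γ → ∃ Θ Λ : Finset α, ↑Θ ⊆ Γ ∧ ↑Λ ⊆ Δ ∧ Der (insert χ Θ) Λ)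
    {a b : α} (hab : a ∉ Γ ∨ b ∉ Γ) :
    ∃ Θ Λ : Finset α, ↑Θ ⊆ Γ ∧ ↑Λ ⊆ Δ ∧ Der (insert a (insert b Θ)) Λ := by
  obtain ⟨c, hc, hcΓ⟩ : ∃ c, (c = a ∨ c = b) ∧ c ∉ Γ := by
    rcases hab with ha | hb
    exacts [⟨a, .inl rfl, ha⟩, ⟨b, .inr rfl, hb⟩]
  obtain ⟨Θ, Λ, hΘ, hΛ, hder⟩ := hmaxL c hcΓ
  exact ⟨Θ, Λ, hΘ, hΛ, hweak hder (insert_subset_insert_insert_of_mem_pair hc Θ) le_rfl⟩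

theorem exists_der_insert_insert_right
    (hweak : ∀ {Θ Λ Θ' Λ' : Finset α}, Der Θ Λ → Θ ⊆ Θ' → Λ ⊆ Λ' → Der Θ' Λ')
    (hmaxR : ∀ χ, χ ∉ Δ → ∃ Θ Λ : Finset α, ↑Θ ⊆ Γ ∧ ↑Λ ⊆ Δ ∧ Der Θ (insert χ Λ))
    {a b : α} (hab : a ∉ Δ ∨ b ∉ Δ) :
    ∃ Θ Λ : Finset α, ↑Θ ⊆ Γ ∧ ↑Λ ⊆ Δ ∧ Der Θ (insert a (insert b Λ)) := by
  obtain ⟨c, hc, hcΔ⟩ : ∃ c, (c = a ∨ c = b) ∧ c ∉ Δ := by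
    rcases hab with ha | hb
    exacts [⟨a, .inl rfl, ha⟩, ⟨b, .inr rfl, hb⟩]
  obtain ⟨Θ, Λ, hΘ, hΛ, hder⟩ := hmaxR c hcΔ
  exact ⟨Θ, Λ, hΘ, hΛ, hweak hder le_rfl (insert_subset_insert_insert_of_mem_pair hc Λ)⟩

end Weakening

theorem mem_iff_mem_of_both_mem_or_both_mem {α : Type*} {Γ Δ : Set α}
    {a b : α} (hab : (a ∈ Γ ∧ b ∈ Γ) ∨ (a ∈ Δ ∧ b ∈ Δ)) (ha : a ∈ Δ → a ∉ Γ)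
    (hb : b ∈ Δ → b ∉ Γ) : a ∈ Γ ↔ b ∈ Γ := by
  rcases hab with ⟨haΓ, hbΓ⟩ | ⟨haΔ, hbΔ⟩
  · exact iff_of_true haΓ hbΓ
  · exact iff_of_false (ha haΔ) (hb hbΔ)

theorem atom_mem_and_mem_or_mem_and_mem_of_eq_mem
    [DecidableEq RVar] [DecidableEq K] [DecidableEq Other]
    {Der : Finset (Form RVar K Other n) → Finset (Form RVar K Other n) → Prop}
    (hweak : ∀ {Θ Λ Θ' Λ' : Finset (Form RVar K Other n)},
      Der Θ Λ → Θ ⊆ Θ' → Λ ⊆ Λ' → Der Θ' Λ')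
    {X Y : RVar} {o : Fin n → K}
    (heqL : ∀ Θ Λ : Finset (Form RVar K Other n),
      Der Θ (insert (Form.atom X o) (insert (Form.atom Y o) Λ)) →
      Der (insert (Form.atom X o) (insert (Form.atom Y o) Θ)) Λ →
      Der (insert (Form.eq X Y) Θ) Λ)
    {Γ Δ : Set (Form RVar K Other n)} (hcon : SCon Der Γ Δ)
    (hmaxL : ∀ χ, χ ∉ Γ →
      ∃ Θ Λ : Finset (Form RVar K Other n), ↑Θ ⊆ Γ ∧ ↑Λ ⊆ Δ ∧ Der (insert χ Θ) Λ)
    (hmaxR : ∀ χ, χ ∉ Δ →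
      ∃ Θ Λ : Finset (Form RVar K Other n), ↑Θ ⊆ Γ ∧ ↑Λ ⊆ Δ ∧ Der Θ (insert χ Λ))
    (h : Form.eq X Y ∈ Γ) :
    (Form.atom X o ∈ Γ ∧ Form.atom Y o ∈ Γ) ∨ (Form.atom X o ∈ Δ ∧ Form.atom Y o ∈ Δ) := by
  by_contra! hno
  obtain ⟨hnotΓ, hnotΔ⟩ := hno
  obtain ⟨Θ₁, Λ₁, hΘ₁, hΛ₁, hderL⟩ :=
    exists_der_insert_insert_left hweak hmaxL (not_and_or.mp fun h ↦ hnotΓ h.1 h.2)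
  obtain ⟨Θ₂, Λ₂, hΘ₂, hΛ₂, hderR⟩ :=
    exists_der_insert_insert_right hweak hmaxR (not_and_or.mp fun h ↦ hnotΔ h.1 h.2)
  have hderEq : Der (insert (Form.eq X Y) (Θ₁ ∪ Θ₂)) (Λ₁ ∪ Λ₂) :=
    heqL _ _
      (hweak hderR Finset.subset_union_right
        (Finset.insert_subset_insert _ (Finset.insert_subset_insert _ Finset.subset_union_right)))
      (hweak hderL
        (Finset.insert_subset_insert _ (Finset.insert_subset_insert _ Finset.subset_union_left))
        Finset.subset_union_left)
  refine hcon _ _ ?_ (by simpa using Set.union_subset hΛ₁ hΛ₂) hderEq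
  simpa using Set.insert_subset h (Set.union_subset hΘ₁ hΘ₂)

/-- truth-lemma case for a second-order identity occurring
in Γ: if X = Y ∈ Γ then, for every tuple ō, the atoms X(ō) and Y(ō) are
both in Γ or both in Δ; consequently, with canonical valuation
v(Z) = {ō : Z(ō) ∈ Γ}, we get v(X) = v(Y). -/
theorem stmt15_soi_gamma_truth_lemma
    [DecidableEq RVar] [DecidableEq K] [DecidableEq Other]
    (Der : Finset (Form RVar K Other n) → Finset (Form RVar K Other n) → Prop)
    -- closure under weakening
    (hweak : ∀ {Θ Λ Θ' Λ' : Finset (Form RVar K Other n)},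
      Der Θ Λ → Θ ⊆ Θ' → Λ ⊆ Λ' → Der Θ' Λ')
    -- the rule (=²⇒)
    (heqL : ∀ (X Y : RVar) (o : Fin n → K) (Θ Λ : Finset (Form RVar K Other n)),
      Der Θ (insert (Form.atom X o) (insert (Form.atom Y o) Λ)) →
      Der (insert (Form.atom X o) (insert (Form.atom Y o) Θ)) Λ →
      Der (insert (Form.eq X Y) Θ) Λ)
    (Γ Δ : Set (Form RVar K Other n))
    (hcon : SCon Der Γ Δ)
    -- Prop41-style consequences of internal maximality
    (hmaxL : ∀ χ : Form RVar K Other n, χ ∉ Γ →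
      ∃ Θ Λ : Finset (Form RVar K Other n), ↑Θ ⊆ Γ ∧ ↑Λ ⊆ Δ ∧ Der (insert χ Θ) Λ)
    (hmaxR : ∀ χ : Form RVar K Other n, χ ∉ Δ →
      ∃ Θ Λ : Finset (Form RVar K Other n), ↑Θ ⊆ Γ ∧ ↑Λ ⊆ Δ ∧ Der Θ (insert χ Λ))
    -- induction hypothesis for atoms: Γ and Δ do not overlap on atoms
    (hatoms : ∀ (Z : RVar) (o : Fin n → K), Form.atom Z o ∈ Δ → Form.atom Z o ∉ Γ)
    (X Y : RVar) (h : Form.eq X Y ∈ Γ) :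
    (∀ o : Fin n → K,
      (Form.atom X o ∈ Γ ∧ Form.atom Y o ∈ Γ) ∨
      (Form.atom X o ∈ Δ ∧ Form.atom Y o ∈ Δ)) ∧
    {o : Fin n → K | Form.atom X o ∈ Γ} = {o : Fin n → K | Form.atom Y o ∈ Γ} := by
  have hboth : ∀ o : Fin n → K,
      (Form.atom X o ∈ Γ ∧ Form.atom Y o ∈ Γ) ∨ (Form.atom X o ∈ Δ ∧ Form.atom Y o ∈ Δ) :=
    fun o ↦ atom_mem_and_mem_or_mem_and_mem_of_eq_mem hweak (heqL X Y o) hcon hmaxL hmaxR h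
  refine ⟨hboth, Set.ext fun o ↦ ?_⟩
  exact mem_iff_mem_of_both_mem_or_both_mem (hboth o) (hatoms X o)
    (hatoms Y o)

end Stmt15
end

section
/- In the saturation construction, extending an S-consistent finite extended sequent (Γ, Δ) with (λX ψ)(ιY φ) ∈ Δ by adding φ[Y:=B], ψ[X:=B], K = B to Δ and φ[Y:=K] to Γ (for a fresh relational constant K) preserves S-consistency, provided the calculus has weakening and the rule (⇒ι²). -/
/-! If the extension were inconsistent, the finite derivable sequents isolating `φ[Y:=B]`,
`ψ[X:=B]` and `φ[Y:=K]` could be weakened to one common context `Θ ⇒ Λ` drawn from `(Γ, Δ)`.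
Since `K` does not occur in `Γ ∪ Δ`, the rule `(⇒ι²)` applies to them and derives
`Θ ⇒ Λ, (λX ψ)(ιY φ)`, a finite sub-sequent of `(Γ, Δ)` because `(λX ψ)(ιY φ) ∈ Δ`. -/

namespace Stmt16

variable {Form : Type*}

/-- S-consistency of an extended sequent (Γ, Δ): no finite sub-sequent is
derivable. -/
def SCon (Der : Finset Form → Finset Form → Prop) (Γ Δ : Set Form) : Prop :=
  ∀ Θ Λ : Finset Form, ↑Θ ⊆ Γ → ↑Λ ⊆ Δ → ¬ Der Θ Λ

theorem SCon.not_der_insert [DecidableEq Form] {Der : Finset Form → Finset Form → Prop}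
    {Γ Δ : Set Form} (hcon : SCon Der Γ Δ) {Θ Λ : Finset Form} {φ : Form}
    (hΘ : ↑Θ ⊆ Γ) (hΛ : ↑Λ ⊆ Δ) (hφ : φ ∈ Δ) : ¬ Der Θ (insert φ Λ) :=
  hcon Θ (insert φ Λ) hΘ (by rw [Finset.coe_insert]; exact Set.insert_subset hφ hΛ)

theorem der_iota_of_separate_premises [DecidableEq Form]
    {Der : Finset Form → Finset Form → Prop} {LF phiB psiB eqKB phiK : Form}
    {FreshK : Form → Prop}
    (hweak : ∀ {Θ Λ Θ' Λ' : Finset Form}, Der Θ Λ → Θ ⊆ Θ' → Λ ⊆ Λ' → Der Θ' Λ')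
    (hiotaR : ∀ Θ Λ : Finset Form,
      (∀ χ ∈ Θ, FreshK χ) → (∀ χ ∈ Λ, FreshK χ) →
      Der Θ (insert phiB Λ) → Der Θ (insert psiB Λ) →
      Der (insert phiK Θ) (insert eqKB Λ) →
      Der Θ (insert LF Λ))
    {Θ₁ Θ₂ Θ₃ Λ₁ Λ₂ Λ₃ : Finset Form}
    (hfreshΘ : ∀ χ ∈ Θ₁ ∪ Θ₂ ∪ Θ₃, FreshK χ) (hfreshΛ : ∀ χ ∈ Λ₁ ∪ Λ₂ ∪ Λ₃, FreshK χ)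
    (h₁ : Der Θ₁ (insert phiB Λ₁)) (h₂ : Der Θ₂ (insert psiB Λ₂))
    (h₃ : Der (insert phiK Θ₃) Λ₃) :
    Der (Θ₁ ∪ Θ₂ ∪ Θ₃) (insert LF (Λ₁ ∪ Λ₂ ∪ Λ₃)) := by
  refine hiotaR _ _ hfreshΘ hfreshΛ (hweak h₁ ?_ ?_) (hweak h₂ ?_ ?_) (hweak h₃ ?_ ?_) <;>
  · intro χ
    simp only [Finset.mem_insert, Finset.mem_union]
    tauto

/-- the saturation step for `(λX ψ)(ιY φ) ∈ Δ` preserves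
S-consistency. `LF` is the formula (λX ψ)(ιY φ), `phiB`, `psiB`, `eqKB`,
`phiK` are φ[Y:=B], ψ[X:=B], K = B and φ[Y:=K], where K is a fresh
relational constant (`FreshK` records freshness of K in a formula). -/
theorem stmt16_saturation_preserves_consistency [DecidableEq Form]
    (Der : Finset Form → Finset Form → Prop)
    (LF phiB psiB eqKB phiK : Form)
    (FreshK : Form → Prop)
    -- closure under weakening
    (hweak : ∀ {Θ Λ Θ' Λ' : Finset Form}, Der Θ Λ → Θ ⊆ Θ' → Λ ⊆ Λ' → Der Θ' Λ')
    -- the rule (⇒ι²), applicable when K is fresh for the side formulas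
    (hiotaR : ∀ Θ Λ : Finset Form,
      (∀ χ ∈ Θ, FreshK χ) → (∀ χ ∈ Λ, FreshK χ) →
      Der Θ (insert phiB Λ) → Der Θ (insert psiB Λ) →
      Der (insert phiK Θ) (insert eqKB Λ) →
      Der Θ (insert LF Λ))
    (Γ Δ : Set Form)
    -- K is fresh: it does not occur in Γ ∪ Δ
    (hfresh : ∀ χ, χ ∈ Γ ∪ Δ → FreshK χ)
    (hLF : LF ∈ Δ)
    -- Prop41-style lemma: inconsistency of the extension yields finite
    -- derivable sub-sequents isolating each added formula
    (hP41 : ¬ SCon Der (Γ ∪ {phiK}) (Δ ∪ {phiB, psiB, eqKB}) →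
      (∃ Θ Λ : Finset Form, ↑Θ ⊆ Γ ∧ ↑Λ ⊆ Δ ∧ Der Θ (insert phiB Λ)) ∧
      (∃ Θ Λ : Finset Form, ↑Θ ⊆ Γ ∧ ↑Λ ⊆ Δ ∧ Der Θ (insert psiB Λ)) ∧
      (∃ Θ Λ : Finset Form, ↑Θ ⊆ Γ ∧ ↑Λ ⊆ Δ ∧ Der (insert phiK Θ) Λ) ∧
      (∃ Θ Λ : Finset Form, ↑Θ ⊆ Γ ∧ ↑Λ ⊆ Δ ∧ Der Θ (insert eqKB Λ)))
    (hcon : SCon Der Γ Δ) :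
    SCon Der (Γ ∪ {phiK}) (Δ ∪ {phiB, psiB, eqKB}) := by
  by_contra hincon
  obtain ⟨⟨Θ₁, Λ₁, hΘ₁, hΛ₁, h₁⟩, ⟨Θ₂, Λ₂, hΘ₂, hΛ₂, h₂⟩, ⟨Θ₃, Λ₃, hΘ₃, hΛ₃, h₃⟩, -⟩ :=
    hP41 hincon
  have hΘ : ↑(Θ₁ ∪ Θ₂ ∪ Θ₃) ⊆ Γ := by
    push_cast
    exact Set.union_subset (Set.union_subset hΘ₁ hΘ₂) hΘ₃
  have hΛ : ↑(Λ₁ ∪ Λ₂ ∪ Λ₃) ⊆ Δ := by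
    push_cast
    exact Set.union_subset (Set.union_subset hΛ₁ hΛ₂) hΛ₃
  exact hcon.not_der_insert hΘ hΛ hLF <| der_iota_of_separate_premises hweak hiotaR
    (fun χ hχ => hfresh χ (.inl (hΘ hχ))) (fun χ hχ => hfresh χ (.inr (hΛ hχ))) h₁ h₂ h₃

end Stmt16
end

section
/- Semantic validity of the characteristic Russellian equivalence for second-order descriptions restricted to atomic ψ: in any general model, M,v ⊨ (λX ψ)(ιY φ) if and only if there exists O ∈ G such that M,v[X:=O] ⊨ ψ, M,v[X:=O] ⊨ φ[Y:=X], and for all O' ∈ G, M,v[Y:=O'] ⊨ φ implies O' = O; equivalently, M,v ⊨ ∃X(∀Y(φ ↔ Y = X) ∧ ψ) where Y = X is interpreted extensionally and the quantifiers range over G. -/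
/-! Since `X` is not free in `φ`, the value of `φ` at `v[X:=O][Y:=O']` is its value at
`v[Y:=O']` (also when `X = Y`), and `φ[Y:=X]` at `v[X:=O]` is `φ` at `v[Y:=O]`. After these
rewrites both sides say that `O` is the unique element of `G` satisfying `φ` and that `ψ`
holds at `v[X:=O]`. -/

open Function

/-- For `p = (Sat · φ)`: the variable `x` does not occur free in `φ`. -/
def IgnoresVar {α β : Type*} [DecidableEq α] (p : (α → β) → Prop) (x : α) : Prop :=
  ∀ (w : α → β) (b : β), p (update w x b) ↔ p w

namespace IgnoresVar

variable {α β : Type*} [DecidableEq α] {p : (α → β) → Prop} {x : α}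

theorem update_update_iff (h : IgnoresVar p x) (v : α → β) (y : α) (a b : β) :
    p (update (update v x a) y b) ↔ p (update v y b) := by
  by_cases hxy : x = y
  · subst hxy
    rw [update_idem]
  · rw [update_comm hxy, h]

/-- `q` plays the role of `φ[y:=x]`, with `p = (Sat · φ)`. -/
theorem subst_update_iff (h : IgnoresVar p x) {q : (α → β) → Prop} {y : α}
    (hsub : ∀ w, q w ↔ p (update w y (w x))) (v : α → β) (a : β) :
    q (update v x a) ↔ p (update v y a) := by
  rw [hsub, update_self, h.update_update_iff]

end IgnoresVar

theorem Set.and_forall_imp_eq_iff_forall_iff_eq {γ : Type*} {s : Set γ} {P : γ → Prop}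
    {a : γ} (ha : a ∈ s) :
    (P a ∧ ∀ b ∈ s, P b → b = a) ↔ ∀ b ∈ s, (P b ↔ b = a) := by
  refine ⟨fun ⟨hPa, huniq⟩ b hb => ⟨huniq b hb, ?_⟩,
    fun h => ⟨(h a ha).2 rfl, fun b hb => (h b hb).1⟩⟩
  rintro rfl
  exact hPa

/-- in any general model, the λι-clause for `(λX ψ)(ιY φ)` is
equivalent to the Russellian unpacking `∃X(∀Y(φ ↔ Y = X) ∧ ψ)`, with the
second-order quantifiers ranging over the domain `G` of the general model and
`Y = X` interpreted extensionally. -/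
theorem stmt17_russellian_equivalence
    {D : Type*} {n : ℕ} {Var : Type*} [DecidableEq Var] {Form : Type*}
    (Sat : (Var → Set (Fin n → D)) → Form → Prop)
    (G : Set (Set (Fin n → D)))
    (X Y : Var) (φ ψ φYX : Form)
    -- substitution lemma: `φ[Y:=X]` at `w` iff `φ` at `w[Y := w X]`
    (hsub : ∀ w : Var → Set (Fin n → D),
      Sat w φYX ↔ Sat (Function.update w Y (w X)) φ)
    -- `X` does not occur free in `φ`
    (hXfresh : ∀ (w : Var → Set (Fin n → D)) (O : Set (Fin n → D)),
      Sat (Function.update w X O) φ ↔ Sat w φ)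
    (v : Var → Set (Fin n → D)) :
    -- the λι clause
    (∃ O ∈ G, Sat (Function.update v X O) ψ ∧
        Sat (Function.update v X O) φYX ∧
        ∀ O' ∈ G, Sat (Function.update v Y O') φ → O' = O) ↔
    -- the Russellian unpacking ∃X(∀Y(φ ↔ Y = X) ∧ ψ)
    (∃ O ∈ G,
      (∀ O' ∈ G,
        (Sat (Function.update (Function.update v X O) Y O') φ ↔ O' = O)) ∧
      Sat (Function.update v X O) ψ) := by
  have hfresh : IgnoresVar (Sat · φ) X := hXfresh
  simp only [hfresh.subst_update_iff hsub, hfresh.update_update_iff]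
  refine exists_congr fun O => and_congr_right fun hO => ?_
  rw [← Set.and_forall_imp_eq_iff_forall_iff_eq hO, and_comm]
end
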